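/- arXiv:1103.4814 — 6 statements merged into one kernel-verified Lean document; each statement's English description precedes it below -/
import Mathlib

section
/- Let x_1,...,x_n be distinct positive real numbers, ω(x) = ∏_{i=1}^n (x - x_i). Define M with (i,j) entry (-1)^{j-1} x_i^{n-j}/ω'(x_i) and J_F with (i,j) entry ∂c_i/∂x_j where c_i is the i-th elementary symmetric polynomial. Then M · J_F = I_n. -/
/-!
The partial derivative `∂e_{m+1}/∂x_k` is `e_m` of the nodes other than `x_k`, so by Vieta the
`k`-th column of `J`, paired with the row `((-1)^j y^(n-1-j))_j`, gives `∏_{ℓ ≠ k} (y - x_ℓ)`.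
At `y = x_i` this vanishes unless `i = k`, where it is `ω'(x_i)`; the factor `1 / ω'(x_i)` in `M`
is the barycentric weight `Lagrange.nodalWeight`.
-/

open Polynomial Finset

namespace MvPolynomial

variable {R σ : Type*} [CommSemiring R] [DecidableEq σ]

theorem pderiv_prod_X (k : σ) (t : Finset σ) :
    pderiv k (∏ i ∈ t, X i : MvPolynomial σ R) =
      if k ∈ t then ∏ i ∈ t.erase k, X i else 0 := by
  induction t using Finset.induction with
  | empty => simp
  | insert a s ha ih =>
    rw [prod_insert ha, Derivation.leibniz, ih, pderiv_X]
    by_cases hka : k = a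
    · subst hka
      simp [ha]
    · have has : a ∉ s.erase k := fun h => ha (mem_of_mem_erase h)
      by_cases hks : k ∈ s <;> simp [hka, hks, erase_insert_of_ne (Ne.symm hka), has]

theorem pderiv_esymm_succ [Fintype σ] (k : σ) (m : ℕ) :
    pderiv k (esymm σ R (m + 1)) = ∑ t ∈ powersetCard m (univ.erase k), ∏ i ∈ t, X i := by
  rw [esymm, map_sum]
  simp_rw [pderiv_prod_X]
  rw [← sum_filter]
  symm
  have hk : ∀ u ∈ powersetCard m (univ.erase k), k ∉ u := fun u hu h =>
    notMem_erase k univ ((mem_powersetCard.mp hu).1 h)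
  refine sum_nbij' (insert k) (fun t => t.erase k) ?_ ?_ ?_ ?_ ?_
  · intro u hu
    rw [mem_filter, mem_powersetCard, card_insert_of_notMem (hk u hu), (mem_powersetCard.mp hu).2]
    exact ⟨⟨subset_univ _, rfl⟩, mem_insert_self k u⟩
  · intro t ht
    simp only [mem_filter, mem_powersetCard] at ht ⊢
    refine ⟨erase_subset_erase k ht.1.1, ?_⟩
    rw [card_erase_of_mem ht.2, ht.1.2, Nat.add_sub_cancel]
  · exact fun u hu => erase_insert (hk u hu)
  · exact fun t ht => insert_erase (mem_filter.mp ht).2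
  · exact fun u hu => by rw [erase_insert (hk u hu)]

theorem eval_pderiv_esymm_succ [Fintype σ] (x : σ → R) (k : σ) (m : ℕ) :
    eval x (pderiv k (esymm σ R (m + 1))) = ((univ.erase k).val.map x).esymm m := by
  rw [pderiv_esymm_succ, Finset.esymm_map_val, map_sum]
  simp_rw [map_prod, eval_X]

end MvPolynomial

theorem Multiset.prod_map_sub_eq_sum_esymm {R : Type*} [CommRing R] (s : Multiset R) (y : R) :
    (s.map (y - ·)).prod =
      ∑ j ∈ Finset.range (card s + 1), (-1) ^ j * y ^ (card s - j) * s.esymm j := by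
  calc (s.map (y - ·)).prod = ((s.map fun t => X - C t).prod).eval y := by
        simp [eval_multiset_prod]
    _ = _ := by
        rw [prod_X_sub_X_eq_sum_esymm, eval_finsetSum]
        refine Finset.sum_congr rfl fun j _ => ?_
        simp only [eval_mul, eval_pow, eval_neg, eval_one, eval_C, eval_X]
        ring

theorem sum_esymm_erase_eq_prod_sub {R : Type*} [CommRing R] {n : ℕ} (x : Fin n → R) (k : Fin n)
    (y : R) :
    ∑ j : Fin n, (-1) ^ (j : ℕ) * y ^ (n - 1 - j) * ((univ.erase k).val.map x).esymm j =
      ∏ ℓ ∈ univ.erase k, (y - x ℓ) := by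
  have hcard : Multiset.card ((univ.erase k).val.map x) = n - 1 := by simp
  have hn : n - 1 + 1 = n := Nat.sub_add_cancel k.pos
  have hmap : (univ.erase k).val.map (fun ℓ => y - x ℓ) =
      ((univ.erase k).val.map x).map (y - ·) := (Multiset.map_map _ _ _).symm
  rw [prod_eq_multiset_prod, hmap, Multiset.prod_map_sub_eq_sum_esymm, hcard, hn,
    Fin.sum_univ_eq_sum_range (fun j => (-1) ^ j * y ^ (n - 1 - j) * _)]

theorem Lagrange.nodalWeight_mul_prod_erase_sub {F ι : Type*} [Field F] [DecidableEq ι]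
    {s : Finset ι} {v : ι → F} (hvs : Set.InjOn v s) {i : ι} (hi : i ∈ s) (k : ι) :
    nodalWeight s v i * ∏ ℓ ∈ s.erase k, (v i - v ℓ) = if i = k then 1 else 0 := by
  rcases eq_or_ne i k with rfl | hik
  · have hw := nodalWeight_ne_zero hvs hi
    rw [nodalWeight_eq_eval_nodal_erase_inv, eval_nodal] at hw ⊢
    rw [if_pos rfl, inv_mul_cancel₀ (mt inv_eq_zero.mpr hw)]
  · rw [if_neg hik, prod_eq_zero (mem_erase.mpr ⟨hik, hi⟩) (sub_self _), mul_zero]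

theorem inv_mul_jacobian_eq_one_general (n : ℕ) (x : Fin n → ℝ)
    (hx : Function.Injective x) :
    let ω : Polynomial ℝ := ∏ i : Fin n, (X - C (x i))
    let J : Matrix (Fin n) (Fin n) ℝ := fun i j =>
      MvPolynomial.eval x (MvPolynomial.pderiv j (MvPolynomial.esymm (Fin n) ℝ (i.val + 1)))
    let M : Matrix (Fin n) (Fin n) ℝ := fun i j =>
      (-1 : ℝ) ^ (j.val) * x i ^ (n - 1 - j.val) / (derivative ω).eval (x i)
    M * J = 1 := by
  intro ω J M
  ext i k
  have hω : ω = Lagrange.nodal univ x := (Lagrange.nodal_eq _ _).symm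
  calc (M * J) i k = Lagrange.nodalWeight univ x i * ∏ ℓ ∈ univ.erase k, (x i - x ℓ) := by
        rw [Lagrange.nodalWeight_eq_eval_derivative_nodal (mem_univ i), ← hω,
          ← sum_esymm_erase_eq_prod_sub, mul_sum, Matrix.mul_apply]
        refine sum_congr rfl fun j _ => ?_
        simp only [M, J, MvPolynomial.eval_pderiv_esymm_succ]
        ring
    _ = (1 : Matrix (Fin n) (Fin n) ℝ) i k := by
        rw [Lagrange.nodalWeight_mul_prod_erase_sub hx.injOn (mem_univ i), Matrix.one_apply]

theorem inv_mul_jacobian_eq_one (n : ℕ) (x : Fin n → ℝ)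
    (hx : Function.Injective x) (hpos : ∀ i, 0 < x i) :
    let ω : Polynomial ℝ := ∏ i : Fin n, (X - C (x i))
    let J : Matrix (Fin n) (Fin n) ℝ := fun i j =>
      MvPolynomial.eval x (MvPolynomial.pderiv j (MvPolynomial.esymm (Fin n) ℝ (i.val + 1)))
    let M : Matrix (Fin n) (Fin n) ℝ := fun i j =>
      (-1 : ℝ) ^ (j.val) * x i ^ (n - 1 - j.val) / (derivative ω).eval (x i)
    M * J = 1 :=
  inv_mul_jacobian_eq_one_general n x hx
end

section
/- Let x_1,...,x_n be distinct real numbers with ω(x) = ∏_{i=1}^n (x - x_i), and define s_m = ∑_{k=1}^n x_k^m / ω'(x_k). Then for every k ≥ 1, the identity c_k·s_{n-1} - c_{k-1}·s_n + c_{k-2}·s_{n+1} - ... + (-1)^{k-1} c_1 · s_{n+k-2} + (-1)^k s_{n+k-1} = 0 holds, where c_j is the j-th elementary symmetric polynomial of x_1,...,x_n (and c_0 = 1). -/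
open Polynomial Finset

-- sum of x_i^m / prod_{j≠i}(x_i - x_j) = 0 for m + 1 < n
theorem aux_low (n : ℕ) (x : Fin n → ℝ) (hx : Function.Injective x) (m : ℕ) (hm : m + 1 < n) :
    ∑ i : Fin n, x i ^ m / ∏ j ∈ Finset.univ.erase i, (x i - x j) = 0 := by
  have hinj : Set.InjOn x (Finset.univ : Finset (Fin n)) := fun a _ b _ h => hx h
  have hcard : (Finset.univ : Finset (Fin n)).card = n := by simp
  have hdeg : (X ^ m : ℝ[X]).degree < ((Finset.univ : Finset (Fin n)).card : ℕ) := by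
    rw [degree_X_pow, hcard]
    exact_mod_cast Nat.lt_of_succ_lt hm
  have h := Lagrange.eq_interpolate (f := (X ^ m : ℝ[X])) hinj hdeg
  have h2 := congrArg (fun p => Polynomial.coeff p (n - 1)) h
  simp only [Lagrange.interpolate_apply] at h2
  rw [Polynomial.finset_sum_coeff] at h2
  have hco : ∀ i : Fin n, (C ((X ^ m : ℝ[X]).eval (x i)) * Lagrange.basis Finset.univ x i).coeff (n-1)
      = x i ^ m * ∏ j ∈ Finset.univ.erase i, (x i - x j)⁻¹ := by
    intro i
    rw [coeff_C_mul, eval_pow, eval_X]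
    congr 1
    have hnd : (Lagrange.basis Finset.univ x i).natDegree = n - 1 := by
      rw [Lagrange.natDegree_basis hinj (mem_univ i), hcard]
    rw [← hnd, Polynomial.coeff_natDegree, Lagrange.basis, Polynomial.leadingCoeff_prod]
    refine Finset.prod_congr rfl fun j hj => ?_
    have hne : x i ≠ x j := fun h => (Finset.mem_erase.mp hj).1 (hx h.symm)
    rw [Lagrange.basisDivisor, leadingCoeff_mul, leadingCoeff_C, leadingCoeff_X_sub_C, mul_one]
  rw [Finset.sum_congr rfl (fun i _ => hco i)] at h2
  rw [Polynomial.coeff_X_pow] at h2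
  have : ¬ (n - 1 = m) := by omega
  simp only [this, if_false] at h2
  rw [Finset.sum_congr rfl (fun i _ => by
    rw [div_eq_mul_inv, ← Finset.prod_inv_distrib] :
    ∀ i ∈ (Finset.univ : Finset (Fin n)), x i ^ m / ∏ j ∈ Finset.univ.erase i, (x i - x j)
      = x i ^ m * ∏ j ∈ Finset.univ.erase i, (x i - x j)⁻¹)]
  exact h2.symm

theorem deriv_eval (n : ℕ) (x : Fin n → ℝ) (i : Fin n) :
    (derivative (∏ i : Fin n, (X - C (x i)))).eval (x i)
      = ∏ j ∈ Finset.univ.erase i, (x i - x j) := by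
  have : (∏ i : Fin n, (X - C (x i))) = Lagrange.nodal Finset.univ x := by
    rw [Lagrange.nodal_eq]
  rw [this, Lagrange.eval_nodal_derivative_eval_node_eq (mem_univ i), Lagrange.eval_nodal]

theorem esymm_powerSum_recurrence (n : ℕ) (x : Fin n → ℝ)
    (hx : Function.Injective x) (k : ℕ) (hk : 1 ≤ k) :
    let ω : Polynomial ℝ := ∏ i : Fin n, (X - C (x i))
    let s : ℕ → ℝ := fun m => ∑ i : Fin n, x i ^ m / (derivative ω).eval (x i)
    let c : ℕ → ℝ := fun m => ∑ I ∈ Finset.univ.powersetCard m, ∏ i ∈ I, x i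
    ∑ j ∈ Finset.range (k + 1), (-1 : ℝ) ^ j * c (k - j) * s (n - 1 + j) = 0 := by
  intro ω s c
  rcases Nat.eq_zero_or_pos n with hn | hn
  · subst hn
    have hs : ∀ m, s m = 0 := fun m => by simp [s]
    simp [hs]
  -- basic facts
  have hD : ∀ i : Fin n, (derivative ω).eval (x i) = ∏ j ∈ Finset.univ.erase i, (x i - x j) :=
    deriv_eval n x
  have hslow : ∀ m, m + 1 < n → s m = 0 := by
    intro m hm
    simp only [s]
    rw [Finset.sum_congr rfl (fun i _ => by rw [hD i])]
    exact aux_low n x hx m hm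
  have hc0 : ∀ a, n < a → c a = 0 := by
    intro a ha
    simp only [c]
    rw [Finset.powersetCard_eq_empty.mpr (by simpa using ha), Finset.sum_empty]
  -- coefficients of ω
  have hcoeff : ∀ m : ℕ, m ≤ n → ω.coeff m = (-1) ^ (n - m) * c (n - m) := by
    intro m hm
    have : ω = (Multiset.map (fun t => X - C t) ((Finset.univ : Finset (Fin n)).val.map x)).prod := by
      simp only [ω, Finset.prod, Multiset.map_map, Function.comp]
    rw [this, Multiset.prod_X_sub_C_coeff _ (by simpa using hm)]
    have hcard : Multiset.card ((Finset.univ : Finset (Fin n)).val.map x) = n := by simp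
    rw [hcard, Finset.esymm_map_val]
  have hωdeg : ω.natDegree = n := by
    simp only [ω]
    rw [natDegree_prod_of_monic _ _ (fun i _ => monic_X_sub_C (x i))]
    simp
  -- the evaluation identity
  have key : ∑ m ∈ Finset.range (n + 1), ω.coeff m * s (m + k - 1) = 0 := by
    have h0 : ∀ i : Fin n, ω.eval (x i) = 0 := by
      intro i
      simp only [ω, eval_prod]
      exact Finset.prod_eq_zero (mem_univ i) (by simp)
    have : (0 : ℝ) = ∑ i : Fin n, x i ^ (k - 1) * ω.eval (x i) / (derivative ω).eval (x i) := by
      simp [h0]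
    rw [this]
    rw [Finset.sum_congr rfl (fun i _ => by
      rw [eval_eq_sum_range, hωdeg, Finset.mul_sum, Finset.sum_div] : ∀ i ∈ (Finset.univ : Finset (Fin n)),
        x i ^ (k - 1) * ω.eval (x i) / (derivative ω).eval (x i)
          = ∑ m ∈ Finset.range (n + 1),
              x i ^ (k-1) * (ω.coeff m * x i ^ m) / (derivative ω).eval (x i))]
    rw [Finset.sum_comm]
    refine Finset.sum_congr rfl fun m _ => ?_
    simp only [s, Finset.mul_sum]
    refine Finset.sum_congr rfl fun i _ => ?_
    have hpow : x i ^ (m + k - 1) = x i ^ (k - 1) * x i ^ m := by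
      rw [← pow_add]
      congr 1
      omega
    rw [hpow]
    ring
  -- common form
  set G : ℕ → ℝ := fun a => (-1 : ℝ) ^ a * c a * s (n - 1 + k - a) with hG
  set N := max n k with hN
  have hNn : n ≤ N := le_max_left _ _
  have hNk : k ≤ N := le_max_right _ _
  have h1 : ∑ m ∈ Finset.range (n + 1), ω.coeff m * s (m + k - 1)
      = ∑ m ∈ Finset.range (n + 1), G (n - m) := by
    refine Finset.sum_congr rfl fun m hm => ?_
    have hm' : m ≤ n := by
      have := Finset.mem_range.mp hm; omega
    have hidx : n - 1 + k - (n - m) = m + k - 1 := by omega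
    simp only [hG, hidx]
    rw [hcoeff m hm']
  have h2 : ∑ m ∈ Finset.range (n + 1), G (n - m) = ∑ a ∈ Finset.range (n + 1), G a :=
    Finset.sum_range_reflect G (n + 1)
  have h3 : ∑ a ∈ Finset.range (n + 1), G a = ∑ a ∈ Finset.range (N + 1), G a := by
    refine Finset.sum_subset (Finset.range_subset_range.mpr (by omega)) ?_
    intro a ha hna
    have hna' : n < a := by
      have := Finset.mem_range.mp ha
      simp only [Finset.mem_range] at hna
      omega
    simp only [hG]
    rw [hc0 a hna']
    ring
  have h4 : ∑ j ∈ Finset.range (k + 1), (-1 : ℝ) ^ j * c (k - j) * s (n - 1 + j)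
      = (-1 : ℝ) ^ k * ∑ j ∈ Finset.range (k + 1), G (k - j) := by
    rw [Finset.mul_sum]
    refine Finset.sum_congr rfl fun j hj => ?_
    have hj' : j ≤ k := by
      have := Finset.mem_range.mp hj; omega
    have hidx : n - 1 + k - (k - j) = n - 1 + j := by omega
    simp only [hG, hidx]
    have hsgn : ((-1 : ℝ)) ^ j = (-1) ^ k * (-1) ^ (k - j) := by
      rw [← pow_add, show k + (k - j) = 2 * (k - j) + j by omega, pow_add, pow_mul]
      norm_num
    rw [hsgn]
    ring
  have h5 : ∑ j ∈ Finset.range (k + 1), G (k - j) = ∑ a ∈ Finset.range (k + 1), G a :=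
    Finset.sum_range_reflect G (k + 1)
  have h6 : ∑ a ∈ Finset.range (k + 1), G a = ∑ a ∈ Finset.range (N + 1), G a := by
    refine Finset.sum_subset (Finset.range_subset_range.mpr (by omega)) ?_
    intro a ha hka
    have hk' : k < a := by
      simp only [Finset.mem_range] at hka
      omega
    have han : a ≤ n := by
      have := Finset.mem_range.mp ha
      rcases max_cases n k with ⟨h, _⟩ | ⟨h, _⟩ <;> omega
    simp only [hG]
    rw [hslow (n - 1 + k - a) (by omega)]
    ring
  rw [h4, h5, h6, ← h3, ← h2, ← h1, key, mul_zero]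
end

section
/- For n > 5, the sum ∑_{k=1}^n e^{2 + 2cos(kπ/n)} < e^n + 1 + (n-2)e. In particular, the Laplacian Estrada index of the path P_n is strictly less than that of the star S_n for n > 5. -/
open Real Finset

theorem lee_path_lt_lee_star (n : ℕ) (hn : 5 < n) :
    ∑ k ∈ Finset.Icc 1 n, Real.exp (2 + 2 * Real.cos (k * Real.pi / n)) <
      Real.exp n + 1 + (n - 2 : ℝ) * Real.exp 1 := by
  have hn6 : (6:ℝ) ≤ (n:ℝ) := by exact_mod_cast hn
  have hsum : ∑ k ∈ Finset.Icc 1 n, Real.exp (2 + 2 * Real.cos (k * Real.pi / n))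
      ≤ (n:ℝ) * Real.exp 4 := by
    calc ∑ k ∈ Finset.Icc 1 n, Real.exp (2 + 2 * Real.cos (k * Real.pi / n))
        ≤ ∑ _k ∈ Finset.Icc 1 n, Real.exp 4 := by
          apply Finset.sum_le_sum
          intro k _
          apply Real.exp_le_exp.mpr
          nlinarith [Real.cos_le_one ((k:ℝ) * Real.pi / n)]
      _ = (n:ℝ) * Real.exp 4 := by
          rw [Finset.sum_const, Nat.card_Icc]
          simp [nsmul_eq_mul]
  have hB : (7:ℝ) < Real.exp 2 := by
    have h1 : Real.exp 2 = Real.exp 1 * Real.exp 1 := by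
      rw [← Real.exp_add]; norm_num
    nlinarith [Real.exp_one_gt_d9]
  have hA : (n:ℝ) - 5 ≤ Real.exp ((n:ℝ) - 6) := by
    have := Real.add_one_le_exp ((n:ℝ) - 6)
    linarith
  have hC : (n:ℝ) < Real.exp ((n:ℝ) - 4) := by
    have h1 : Real.exp ((n:ℝ) - 4) = Real.exp 2 * Real.exp ((n:ℝ) - 6) := by
      rw [← Real.exp_add]; ring_nf
    nlinarith [Real.exp_pos ((n:ℝ) - 6)]
  have h2 : (n:ℝ) * Real.exp 4 < Real.exp n := by
    have h1 : Real.exp (n:ℝ) = Real.exp 4 * Real.exp ((n:ℝ) - 4) := by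
      rw [← Real.exp_add]; ring_nf
    nlinarith [Real.exp_pos (4:ℝ)]
  nlinarith [Real.exp_pos (1:ℝ)]
end

section
/- Let μ_1 > μ_2 > ... > μ_{n-1} > 0 be distinct positive reals and ω(x) = ∏_{i=1}^{n-1}(x - μ_i). Then for each 1 ≤ k ≤ n-1, the quantity (-1)^{k-1} ∑_{i=1}^{n-1} μ_i^{n-1-k}/(ω'(μ_i)·√μ_i) is strictly positive. -/
/-!
Write `1 / √μ = (2 / π) ∫₀^∞ dt / (μ + t²)`. With `d = n - 1 - k < n - 1`, the partial fraction
expansion of `x ^ d / ω(x)` at `x = -t²` gives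
`∑ μᵢ ^ d / (ω'(μᵢ) (μᵢ + t²)) = (-1) ^ (k - 1) t ^ (2d) / ∏ (μⱼ + t²)`,
so the quantity is `(2 / π) ∫₀^∞ t ^ (2d) / ∏ (μⱼ + t²) dt`, the integral of a positive function.
-/

open Polynomial Finset MeasureTheory Set

theorem integrableOn_Ioi_inv_add_sq {a : ℝ} (ha : 0 < a) :
    IntegrableOn (fun t : ℝ => (a + t ^ 2)⁻¹) (Ioi 0) := by
  refine ((integrable_inv_one_add_sq.const_mul (min a 1)⁻¹).restrict).mono' ?_ ?_
  · exact (Continuous.inv₀ (by fun_prop) fun t => by positivity).aestronglyMeasurable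
  · refine Filter.Eventually.of_forall fun t => ?_
    have hmin : 0 < min a 1 := lt_min ha one_pos
    rw [Real.norm_eq_abs, abs_of_nonneg (by positivity), ← mul_inv]
    gcongr
    nlinarith [min_le_left a 1, min_le_right a 1, sq_nonneg t]

theorem integral_Ioi_inv_add_sq {a : ℝ} (ha : 0 < a) :
    ∫ t in Ioi 0, (a + t ^ 2)⁻¹ = Real.pi / (2 * √a) := by
  obtain ⟨r, hr, rfl⟩ : ∃ r, 0 < r ∧ a = r ^ 2 :=
    ⟨√a, Real.sqrt_pos.mpr ha, (Real.sq_sqrt ha.le).symm⟩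
  have hscale : ∀ t : ℝ, (r ^ 2 + t ^ 2)⁻¹ = (r ^ 2)⁻¹ * (1 + (r⁻¹ * t) ^ 2)⁻¹ := fun t => by
    field_simp
  simp_rw [hscale, integral_const_mul]
  rw [integral_comp_mul_left_Ioi (fun u => (1 + u ^ 2)⁻¹) 0 (inv_pos.mpr hr), mul_zero,
    integral_Ioi_inv_one_add_sq, Real.arctan_zero, smul_eq_mul, inv_inv, Real.sqrt_sq hr.le]
  field_simp
  ring

theorem integral_Ioi_pos {f : ℝ → ℝ} {a : ℝ} (hf : IntegrableOn f (Ioi a))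
    (hpos : ∀ t ∈ Ioi a, 0 < f t) : 0 < ∫ t in Ioi a, f t := by
  rw [setIntegral_pos_iff_support_of_nonneg_ae
    (ae_restrict_of_forall_mem measurableSet_Ioi fun t ht => (hpos t ht).le) hf,
    inter_eq_right.mpr fun t ht => Function.mem_support.mpr (hpos t ht).ne', Real.volume_Ioi]
  exact ENNReal.zero_lt_top

theorem integrableOn_Ioi_div_add_sq {a : ℝ} (ha : 0 < a) (c : ℝ) :
    IntegrableOn (fun t : ℝ => c / (a + t ^ 2)) (Ioi 0) := by
  simp only [div_eq_mul_inv]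
  exact (integrableOn_Ioi_inv_add_sq ha).const_mul c

theorem sum_div_sqrt_eq_integral {ι : Type*} (s : Finset ι) {μ : ι → ℝ}
    (hμ : ∀ i ∈ s, 0 < μ i) (c : ι → ℝ) :
    ∑ i ∈ s, c i / √(μ i) = 2 / Real.pi * ∫ t in Ioi 0, ∑ i ∈ s, c i / (μ i + t ^ 2) := by
  rw [integral_finsetSum _ fun i hi => integrableOn_Ioi_div_add_sq (hμ i hi) (c i), mul_sum]
  refine sum_congr rfl fun i hi => ?_
  simp_rw [div_eq_mul_inv (c i), integral_const_mul, integral_Ioi_inv_add_sq (hμ i hi)]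
  field_simp

namespace Lagrange

variable {F ι : Type*} [Field F] [DecidableEq ι] {s : Finset ι} {v : ι → F}

theorem eval_div_eval_nodal_eq_sum {p : F[X]} (hvs : Set.InjOn v s) (hp : p.degree < #s) {x : F}
    (hx : ∀ i ∈ s, x ≠ v i) :
    p.eval x / (nodal s v).eval x =
      ∑ i ∈ s, p.eval (v i) / ((derivative (nodal s v)).eval (v i) * (x - v i)) := by
  rw [div_eq_iff (eval_nodal_not_at_node hx), mul_comm]
  conv_lhs => rw [eq_interpolate hvs hp, eval_interpolate_not_at_node _ hx]
  congr 1
  refine sum_congr rfl fun i hi => ?_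
  rw [nodalWeight_eq_eval_derivative_nodal hi, div_eq_mul_inv, mul_inv]
  ring

theorem sum_pow_div_eval_derivative_nodal_mul_add (hvs : Set.InjOn v s) {d : ℕ} (hd : d < #s)
    {y : F} (hy : ∀ i ∈ s, v i + y ≠ 0) :
    (-1) ^ (#s - 1 - d) * ∑ i ∈ s, v i ^ d / ((derivative (nodal s v)).eval (v i) * (v i + y)) =
      y ^ d / ∏ i ∈ s, (v i + y) := by
  have hx : ∀ i ∈ s, -y ≠ v i := fun i hi h => hy i hi (by rw [← h]; ring)
  have hdeg : (X ^ d : F[X]).degree < #s := by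
    rw [degree_X_pow]; exact_mod_cast hd
  have h := eval_div_eval_nodal_eq_sum hvs hdeg hx
  simp only [eval_pow, eval_X, eval_nodal] at h
  have hprod : ∏ i ∈ s, (-y - v i) = (-1) ^ #s * ∏ i ∈ s, (v i + y) := by
    rw [← prod_const, ← prod_mul_distrib]
    exact prod_congr rfl fun i _ => by ring
  have hsum : ∑ i ∈ s, v i ^ d / ((derivative (nodal s v)).eval (v i) * (-y - v i)) =
      -∑ i ∈ s, v i ^ d / ((derivative (nodal s v)).eval (v i) * (v i + y)) := by
    rw [← sum_neg_distrib]
    exact sum_congr rfl fun i _ => by rw [neg_sub_left, mul_neg, div_neg, add_comm]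
  obtain ⟨e, he⟩ : ∃ e, #s = e + d + 1 := ⟨#s - 1 - d, by omega⟩
  rw [hprod, hsum, he, neg_pow, pow_add, pow_add] at h
  rw [he, show e + d + 1 - 1 - d = e by omega, ← neg_eq_iff_eq_neg.mpr h]
  rcases neg_one_pow_eq_or F d with hd' | hd' <;> rcases neg_one_pow_eq_or F e with he' | he' <;>
    · rw [hd', he']; field_simp

end Lagrange

theorem lel_partial_derivative_pos_general (n : ℕ) (μ : Fin (n - 1) → ℝ)
    (hdec : StrictAnti μ) (hpos : ∀ i, 0 < μ i) (k : ℕ) (hk1 : 1 ≤ k) (hk2 : k ≤ n - 1) :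
    let ω : Polynomial ℝ := ∏ i : Fin (n - 1), (X - C (μ i))
    0 < (-1 : ℝ) ^ (k - 1) *
      ∑ i : Fin (n - 1), μ i ^ (n - 1 - k) / ((derivative ω).eval (μ i) * Real.sqrt (μ i)) := by
  intro ω
  have hω : ω = Lagrange.nodal univ μ := (Lagrange.nodal_eq _ _).symm
  set c : Fin (n - 1) → ℝ := fun i => μ i ^ (n - 1 - k) / (derivative ω).eval (μ i)
  have hpartial : ∀ t : ℝ, (-1) ^ (k - 1) * ∑ i, c i / (μ i + t ^ 2) =
      (t ^ 2) ^ (n - 1 - k) / ∏ i, (μ i + t ^ 2) := by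
    intro t
    have hsign : #(univ : Finset (Fin (n - 1))) - 1 - (n - 1 - k) = k - 1 := by
      rw [card_univ, Fintype.card_fin]; omega
    rw [← hsign, ← Lagrange.sum_pow_div_eval_derivative_nodal_mul_add hdec.injective.injOn
      (by rw [card_univ, Fintype.card_fin]; omega) fun i _ => by have := hpos i; positivity]
    simp only [c, hω, div_div]
  have hint : IntegrableOn (fun t => (-1) ^ (k - 1) * ∑ i, c i / (μ i + t ^ 2)) (Ioi 0) :=
    (integrable_finsetSum _ fun i _ => integrableOn_Ioi_div_add_sq (hpos i) (c i)).const_mul _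
  calc 0 < 2 / Real.pi * ∫ t in Ioi 0, (-1) ^ (k - 1) * ∑ i, c i / (μ i + t ^ 2) := by
        refine mul_pos (by positivity) (integral_Ioi_pos hint fun t ht => ?_)
        rw [hpartial]
        exact div_pos (pow_pos (pow_pos ht 2) _) (prod_pos fun i _ => by
          have := hpos i; positivity)
    _ = _ := by
        rw [integral_const_mul, mul_left_comm, ← sum_div_sqrt_eq_integral univ (fun i _ => hpos i)]
        simp only [c, div_div]

theorem lel_partial_derivative_pos (n : ℕ) (hn : 2 ≤ n) (μ : Fin (n - 1) → ℝ)
    (hdec : StrictAnti μ) (hpos : ∀ i, 0 < μ i) (k : ℕ) (hk1 : 1 ≤ k) (hk2 : k ≤ n - 1) :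
    let ω : Polynomial ℝ := ∏ i : Fin (n - 1), (X - C (μ i))
    0 < (-1 : ℝ) ^ (k - 1) *
      ∑ i : Fin (n - 1), μ i ^ (n - 1 - k) / ((derivative ω).eval (μ i) * Real.sqrt (μ i)) :=
  lel_partial_derivative_pos_general n μ hdec hpos k hk1 hk2
end

section
/- Let μ_1 ≥ ... ≥ μ_{n-1} ≥ 0 and ν_1 ≥ ... ≥ ν_{n-1} ≥ 0 be nonnegative reals, and let c_k and d_k denote the k-th elementary symmetric polynomials of the μ's and ν's respectively. If c_k ≤ d_k for all k = 1,...,n-1, then ∑_{i=1}^{n-1} √μ_i ≤ ∑_{i=1}^{n-1} √ν_i. -/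
/-!
The key identity is `∫₀^∞ log (1 + a t²) / t² dt = π √a` for `a ≥ 0`: substituting `u = √a t`
reduces it to `a = 1`, where `2 arctan u - log (1 + u²) / u` is an antiderivative vanishing at `0`
and tending to `π` at infinity. Summing over the `μᵢ`, `π ∑ √μᵢ` is the integral of
`log ∏ (1 + μᵢ t²) / t²`. Expanding the product as `∑ₖ cₖ t^{2k}` shows that it is dominated
pointwise by the same product for the `νᵢ`, and integrating gives the claim.
-/

open Finset Real MeasureTheory Filter Set Topology

section Esymm

variable {R ι : Type*} [CommSemiring R] [Fintype ι]

theorem prod_one_add_mul_eq_sum_pow_mul (f : ι → R) (x : R) :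
    ∏ i, (1 + f i * x) =
      ∑ k ∈ range (Fintype.card ι + 1), x ^ k * ∑ I ∈ univ.powersetCard k, ∏ i ∈ I, f i := by
  rw [prod_one_add, sum_powerset, card_univ]
  refine sum_congr rfl fun k _ => ?_
  rw [mul_sum]
  refine sum_congr rfl fun I hI => ?_
  rw [prod_mul_distrib, prod_const, (mem_powersetCard.mp hI).2, mul_comm]

theorem prod_one_add_mul_le_of_esymm_le [PartialOrder R] [IsOrderedRing R] {f g : ι → R}
    (hfg : ∀ k, 1 ≤ k → k ≤ Fintype.card ι →
      (∑ I ∈ univ.powersetCard k, ∏ i ∈ I, f i) ≤ ∑ I ∈ univ.powersetCard k, ∏ i ∈ I, g i)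
    {x : R} (hx : 0 ≤ x) :
    ∏ i, (1 + f i * x) ≤ ∏ i, (1 + g i * x) := by
  rw [prod_one_add_mul_eq_sum_pow_mul, prod_one_add_mul_eq_sum_pow_mul]
  refine sum_le_sum fun k hk => ?_
  rcases Nat.eq_zero_or_pos k with rfl | hk_pos
  · simp
  · exact mul_le_mul_of_nonneg_left (hfg k hk_pos (Nat.lt_succ_iff.mp (mem_range.mp hk)))
      (pow_nonneg hx k)

end Esymm

theorem hasDerivAt_two_mul_arctan_sub_log_one_add_sq_div {u : ℝ} (hu : u ≠ 0) :
    HasDerivAt (fun u => 2 * arctan u - log (1 + u ^ 2) / u) (log (1 + u ^ 2) / u ^ 2) u := by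
  have hpos : 0 < 1 + u ^ 2 := by positivity
  have hlog : HasDerivAt (fun u => log (1 + u ^ 2)) (2 * u / (1 + u ^ 2)) u := by
    simpa using ((hasDerivAt_pow 2 u).const_add 1).log hpos.ne'
  refine (((hasDerivAt_arctan u).const_mul 2).sub (hlog.div (hasDerivAt_id' u) hu)).congr_deriv ?_
  field_simp
  ring

theorem tendsto_log_one_add_sq_div_nhds_zero :
    Tendsto (fun u => log (1 + u ^ 2) / u) (𝓝 0) (𝓝 0) := by
  refine squeeze_zero_norm (fun u => ?_) tendsto_norm_zero
  have hlog : log (1 + u ^ 2) ≤ u ^ 2 := by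
    linarith [log_le_sub_one_of_pos (show 0 < 1 + u ^ 2 by positivity)]
  rw [norm_div, Real.norm_of_nonneg (log_nonneg (by nlinarith)), Real.norm_eq_abs]
  rcases eq_or_ne u 0 with rfl | hu
  · simp
  · rw [div_le_iff₀ (abs_pos.mpr hu), ← sq, sq_abs]
    exact hlog

theorem tendsto_log_one_add_sq_div_atTop :
    Tendsto (fun u => log (1 + u ^ 2) / u) atTop (𝓝 0) := by
  have hlog : Tendsto (fun u => log u / u) atTop (𝓝 0) := by
    simpa using tendsto_pow_log_div_mul_add_atTop 1 0 1 one_ne_zero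
  have hbound : Tendsto (fun u => log 2 / u + 2 * (log u / u)) atTop (𝓝 0) := by
    simpa using (tendsto_const_nhds.div_atTop tendsto_id).add (hlog.const_mul 2)
  refine tendsto_of_tendsto_of_tendsto_of_le_of_le' tendsto_const_nhds hbound ?_ ?_
  all_goals filter_upwards [eventually_ge_atTop 1] with u hu
  · exact div_nonneg (log_nonneg (by nlinarith)) (by linarith)
  · -- `1 + u² ≤ 2 u²` for `u ≥ 1`
    have h : log (1 + u ^ 2) ≤ log 2 + 2 * log u := by
      rw [show 2 * log u = log (u ^ 2) by simp [log_pow], ← log_mul two_ne_zero (by positivity)]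
      exact log_le_log (by positivity) (by nlinarith)
    rw [mul_div_assoc', ← add_div]
    exact div_le_div_of_nonneg_right h (by linarith)

theorem log_one_add_sq_div_sq_nonneg (u : ℝ) : 0 ≤ log (1 + u ^ 2) / u ^ 2 :=
  div_nonneg (log_nonneg (by nlinarith)) (sq_nonneg u)

theorem continuousWithinAt_two_mul_arctan_sub_log_one_add_sq_div :
    ContinuousWithinAt (fun u => 2 * arctan u - log (1 + u ^ 2) / u) (Ici 0) 0 := by
  have h := ((continuous_arctan.const_mul 2).tendsto 0).sub tendsto_log_one_add_sq_div_nhds_zero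
  refine ContinuousAt.continuousWithinAt ?_
  simpa [ContinuousAt] using h

theorem tendsto_two_mul_arctan_sub_log_one_add_sq_div_atTop :
    Tendsto (fun u => 2 * arctan u - log (1 + u ^ 2) / u) atTop (𝓝 π) := by
  have harctan : Tendsto (fun u => 2 * arctan u) atTop (𝓝 (2 * (π / 2))) :=
    (tendsto_arctan_atTop.mono_right nhdsWithin_le_nhds).const_mul 2
  simpa [mul_div_cancel₀] using harctan.sub tendsto_log_one_add_sq_div_atTop

theorem integrableOn_log_one_add_sq_div_sq :
    IntegrableOn (fun u => log (1 + u ^ 2) / u ^ 2) (Ioi 0) :=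
  integrableOn_Ioi_deriv_of_nonneg continuousWithinAt_two_mul_arctan_sub_log_one_add_sq_div
    (fun _ hu => hasDerivAt_two_mul_arctan_sub_log_one_add_sq_div (ne_of_gt hu))
    (fun u _ => log_one_add_sq_div_sq_nonneg u)
    tendsto_two_mul_arctan_sub_log_one_add_sq_div_atTop

theorem integral_log_one_add_sq_div_sq : ∫ u in Ioi 0, log (1 + u ^ 2) / u ^ 2 = π := by
  rw [integral_Ioi_of_hasDerivAt_of_nonneg
    continuousWithinAt_two_mul_arctan_sub_log_one_add_sq_div
    (fun _ hu => hasDerivAt_two_mul_arctan_sub_log_one_add_sq_div (ne_of_gt hu))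
    (fun u _ => log_one_add_sq_div_sq_nonneg u)
    tendsto_two_mul_arctan_sub_log_one_add_sq_div_atTop]
  simp

theorem log_one_add_mul_sq_div_sq_eq {a : ℝ} (ha : 0 ≤ a) (t : ℝ) :
    log (1 + a * t ^ 2) / t ^ 2 = a * (log (1 + (√a * t) ^ 2) / (√a * t) ^ 2) := by
  rw [mul_pow, sq_sqrt ha]
  rcases eq_or_ne a 0 with rfl | ha'
  · simp
  · rw [mul_div_assoc', mul_div_mul_left _ _ ha']

theorem integrableOn_log_one_add_mul_sq_div_sq {a : ℝ} (ha : 0 ≤ a) :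
    IntegrableOn (fun t => log (1 + a * t ^ 2) / t ^ 2) (Ioi 0) := by
  rcases ha.eq_or_lt with rfl | ha_pos
  · simp
  simp_rw [log_one_add_mul_sq_div_sq_eq ha]
  have h := (integrableOn_Ioi_comp_mul_left_iff (fun u => log (1 + u ^ 2) / u ^ 2) 0
    (sqrt_pos.2 ha_pos)).2 (by simpa using integrableOn_log_one_add_sq_div_sq)
  exact h.const_mul a

theorem integral_log_one_add_mul_sq_div_sq {a : ℝ} (ha : 0 ≤ a) :
    ∫ t in Ioi 0, log (1 + a * t ^ 2) / t ^ 2 = π * √a := by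
  rcases ha.eq_or_lt with rfl | ha_pos
  · simp
  simp_rw [log_one_add_mul_sq_div_sq_eq ha]
  rw [integral_const_mul,
    integral_comp_mul_left_Ioi (fun u => log (1 + u ^ 2) / u ^ 2) 0 (sqrt_pos.2 ha_pos),
    mul_zero, integral_log_one_add_sq_div_sq, smul_eq_mul, ← mul_assoc, ← div_eq_mul_inv, div_sqrt,
    mul_comm]

section Prod

variable {ι : Type*} [Fintype ι] {f : ι → ℝ}

theorem log_prod_one_add_mul_sq_div_sq (hf : ∀ i, 0 ≤ f i) (t : ℝ) :
    log (∏ i, (1 + f i * t ^ 2)) / t ^ 2 = ∑ i, log (1 + f i * t ^ 2) / t ^ 2 := by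
  rw [log_prod fun i _ => by nlinarith [hf i, sq_nonneg t], sum_div]

theorem integrableOn_log_prod_one_add_mul_sq_div_sq (hf : ∀ i, 0 ≤ f i) :
    IntegrableOn (fun t => log (∏ i, (1 + f i * t ^ 2)) / t ^ 2) (Ioi 0) := by
  simp_rw [log_prod_one_add_mul_sq_div_sq hf]
  exact integrable_finsetSum _ fun i _ => integrableOn_log_one_add_mul_sq_div_sq (hf i)

theorem integral_log_prod_one_add_mul_sq_div_sq (hf : ∀ i, 0 ≤ f i) :
    ∫ t in Ioi 0, log (∏ i, (1 + f i * t ^ 2)) / t ^ 2 = π * ∑ i, √(f i) := by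
  simp_rw [log_prod_one_add_mul_sq_div_sq hf]
  rw [integral_finsetSum _ fun i _ => integrableOn_log_one_add_mul_sq_div_sq (hf i), mul_sum]
  exact sum_congr rfl fun i _ => integral_log_one_add_mul_sq_div_sq (hf i)

end Prod

theorem sum_sqrt_mono_of_esymm_le_general (n : ℕ) (μ ν : Fin (n - 1) → ℝ)
    (hμ : ∀ i, 0 ≤ μ i) (hν : ∀ i, 0 ≤ ν i)
    (hc : ∀ k, 1 ≤ k → k ≤ n - 1 →
      (∑ I ∈ Finset.univ.powersetCard k, ∏ i ∈ I, μ i) ≤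
      (∑ I ∈ Finset.univ.powersetCard k, ∏ i ∈ I, ν i)) :
    ∑ i : Fin (n - 1), Real.sqrt (μ i) ≤ ∑ i : Fin (n - 1), Real.sqrt (ν i) := by
  have hprod : ∀ t ∈ Ioi (0 : ℝ),
      log (∏ i, (1 + μ i * t ^ 2)) / t ^ 2 ≤ log (∏ i, (1 + ν i * t ^ 2)) / t ^ 2 := by
    intro t _
    have hle := prod_one_add_mul_le_of_esymm_le (f := μ) (g := ν) (by simpa using hc) (sq_nonneg t)
    have hpos : 0 < ∏ i, (1 + μ i * t ^ 2) :=
      prod_pos fun i _ => by nlinarith [hμ i, sq_nonneg t]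
    exact div_le_div_of_nonneg_right (log_le_log hpos hle) (sq_nonneg t)
  have hint := setIntegral_mono_on (integrableOn_log_prod_one_add_mul_sq_div_sq hμ)
    (integrableOn_log_prod_one_add_mul_sq_div_sq hν) measurableSet_Ioi hprod
  rw [integral_log_prod_one_add_mul_sq_div_sq hμ, integral_log_prod_one_add_mul_sq_div_sq hν]
    at hint
  exact le_of_mul_le_mul_left hint pi_pos

theorem sum_sqrt_mono_of_esymm_le (n : ℕ) (μ ν : Fin (n - 1) → ℝ)
    (hμa : Antitone μ) (hνa : Antitone ν) (hμ : ∀ i, 0 ≤ μ i) (hν : ∀ i, 0 ≤ ν i)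
    (hc : ∀ k, 1 ≤ k → k ≤ n - 1 →
      (∑ I ∈ Finset.univ.powersetCard k, ∏ i ∈ I, μ i) ≤
      (∑ I ∈ Finset.univ.powersetCard k, ∏ i ∈ I, ν i)) :
    ∑ i : Fin (n - 1), Real.sqrt (μ i) ≤ ∑ i : Fin (n - 1), Real.sqrt (ν i) :=
  sum_sqrt_mono_of_esymm_le_general n μ ν hμ hν hc
end

section
/- Let G and H be two n-vertex graphs whose Laplacian characteristic polynomials are det(λI - L(G)) = ∑_{k=0}^n (-1)^k c_k(G) λ^{n-k} and similarly for H. If c_k(G) ≤ c_k(H) for k = 1,...,n-1, then LEL(G) ≤ LEL(H), where LEL is the sum of square roots of Laplacian eigenvalues. Moreover, if c_k(G) < c_k(H) for some k, then LEL(G) < LEL(H). -/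
/-!
For `x ≥ 0` one has `∫₀^∞ log (1 + x t) t^{-3/2} dt = 2π √x`, hence
`2π · LEL(G) = ∫₀^∞ log (∏ᵢ (1 + μᵢ t)) t^{-3/2} dt`. By Vieta the product is `∑ₖ cₖ(G) tᵏ`, where
`c₀ = 1` and `cₙ = 0` for every graph, so domination of the coefficients `c₁, …, cₙ₋₁` gives
domination of the integrands for every `t > 0`, strict as soon as one coefficient is strictly
smaller.
-/

open Finset MeasureTheory Set Filter Polynomial Topology

noncomputable section

def sqrtKernel (x t : ℝ) : ℝ := Real.log (1 + x * t) / (t * √t)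

-- integrate by parts, then substitute `u = √(x t)` in `∫ x / ((1 + x t) √t) dt`
def sqrtKernelPrimitive (x t : ℝ) : ℝ :=
  -2 * Real.log (1 + x * t) / √t + 4 * √x * Real.arctan (√x * √t)

lemma sqrtKernel_nonneg {x t : ℝ} (hx : 0 ≤ x) (ht : 0 ≤ t) : 0 ≤ sqrtKernel x t :=
  div_nonneg (Real.log_nonneg (by nlinarith)) (by positivity)

@[simp]
lemma sqrtKernel_zero_left : sqrtKernel 0 = 0 := by
  ext t
  simp [sqrtKernel]

lemma hasDerivAt_sqrtKernelPrimitive {x t : ℝ} (hx : 0 ≤ x) (ht : 0 < t) :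
    HasDerivAt (sqrtKernelPrimitive x) (sqrtKernel x t) t := by
  have hsqrt : HasDerivAt (√·) (1 / (2 * √t)) t := Real.hasDerivAt_sqrt ht.ne'
  have hlog : HasDerivAt (fun t => Real.log (1 + x * t)) (x / (1 + x * t)) t := by
    simpa using (((hasDerivAt_id t).const_mul x).const_add 1).log (by positivity)
  refine (((hlog.const_mul (-2)).div hsqrt (by positivity)).add
    ((hsqrt.const_mul √x).arctan.const_mul (4 * √x))).congr_deriv ?_
  obtain ⟨s, hs, rfl⟩ : ∃ s, 0 < s ∧ s ^ 2 = t := ⟨√t, by positivity, Real.sq_sqrt ht.le⟩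
  obtain ⟨y, hy, rfl⟩ : ∃ y, 0 ≤ y ∧ y ^ 2 = x := ⟨√x, by positivity, Real.sq_sqrt hx⟩
  simp only [sqrtKernel, Real.sqrt_sq hs.le, Real.sqrt_sq hy]
  field_simp
  ring

lemma continuousWithinAt_sqrtKernelPrimitive_zero {x : ℝ} (hx : 0 ≤ x) :
    ContinuousWithinAt (sqrtKernelPrimitive x) (Ici 0) 0 := by
  refine ContinuousWithinAt.add ?_ (by fun_prop)
  have hlower : Tendsto (fun t => -2 * x * √t) (𝓝[≥] 0) (𝓝 (-2 * x * √0)) :=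
    (by fun_prop : Continuous fun t => -2 * x * √t).continuousWithinAt
  rw [Real.sqrt_zero, mul_zero] at hlower
  -- `0 ≤ log (1 + x t) ≤ x t` squeezes the first term between `-2 x √t` and `0`
  suffices Tendsto (fun t => -2 * Real.log (1 + x * t) / √t) (𝓝[≥] 0) (𝓝 0) by
    simpa [ContinuousWithinAt] using this
  refine tendsto_of_tendsto_of_tendsto_of_le_of_le' hlower tendsto_const_nhds ?_ ?_
  all_goals filter_upwards [self_mem_nhdsWithin] with t (ht : 0 ≤ t)
  · rcases ht.eq_or_lt with rfl | ht
    · simp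
    rw [le_div_iff₀ (by positivity), mul_assoc, Real.mul_self_sqrt ht.le]
    nlinarith [Real.log_le_sub_one_of_pos (x := 1 + x * t) (by positivity)]
  · exact div_nonpos_of_nonpos_of_nonneg
      (by nlinarith [Real.log_nonneg (x := 1 + x * t) (by nlinarith)]) (Real.sqrt_nonneg t)

lemma tendsto_sqrtKernelPrimitive_atTop {x : ℝ} (hx : 0 < x) :
    Tendsto (sqrtKernelPrimitive x) atTop (𝓝 (2 * Real.pi * √x)) := by
  have harctan : Tendsto (fun t => 4 * √x * Real.arctan (√x * √t)) atTop
      (𝓝 (4 * √x * (Real.pi / 2))) :=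
    ((Real.tendsto_arctan_atTop.mono_right nhdsWithin_le_nhds).comp
      (Real.tendsto_sqrt_atTop.const_mul_atTop (by positivity))).const_mul _
  have hlog_div_sqrt : Tendsto (fun u => Real.log u / √u) atTop (𝓝 0) := by
    simpa [Real.sqrt_eq_rpow] using
      (isLittleO_log_rpow_atTop one_half_pos).tendsto_div_nhds_zero
  have hu : Tendsto (fun t => 1 + x * t) atTop atTop :=
    tendsto_atTop_add_const_left _ _ (tendsto_id.const_mul_atTop hx)
  have hroot : Tendsto (fun t => √(t⁻¹ + x)) atTop (𝓝 √x) := by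
    simpa using (tendsto_inv_atTop_zero.add_const x).sqrt
  have hlog : Tendsto (fun t => -2 * Real.log (1 + x * t) / √t) atTop (𝓝 0) := by
    have := (((hlog_div_sqrt.comp hu).mul hroot).const_mul (-2))
    rw [zero_mul, mul_zero] at this
    refine this.congr' ?_
    filter_upwards [eventually_gt_atTop 0] with t ht
    have : √(1 + x * t) = √t * √(t⁻¹ + x) := by
      rw [← Real.sqrt_mul ht.le]; congr 1; field_simp
    simp only [Function.comp_apply, this]
    field_simp
  rw [show 2 * Real.pi * √x = 0 + 4 * √x * (Real.pi / 2) by ring]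
  exact hlog.add harctan

lemma integrableOn_sqrtKernel {x : ℝ} (hx : 0 ≤ x) : IntegrableOn (sqrtKernel x) (Ioi 0) := by
  rcases hx.eq_or_lt with rfl | hx'
  · rw [sqrtKernel_zero_left]; exact integrableOn_zero
  exact integrableOn_Ioi_deriv_of_nonneg (continuousWithinAt_sqrtKernelPrimitive_zero hx)
    (fun t ht => hasDerivAt_sqrtKernelPrimitive hx ht) (fun t ht => sqrtKernel_nonneg hx ht.out.le)
    (tendsto_sqrtKernelPrimitive_atTop hx')

lemma integral_sqrtKernel {x : ℝ} (hx : 0 ≤ x) :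
    ∫ t in Ioi 0, sqrtKernel x t = 2 * Real.pi * √x := by
  rcases hx.eq_or_lt with rfl | hx'
  · simp
  rw [integral_Ioi_of_hasDerivAt_of_nonneg (continuousWithinAt_sqrtKernelPrimitive_zero hx)
    (fun t ht => hasDerivAt_sqrtKernelPrimitive hx ht) (fun t ht => sqrtKernel_nonneg hx ht.out.le)
    (tendsto_sqrtKernelPrimitive_atTop hx')]
  simp [sqrtKernelPrimitive]

lemma setIntegral_lt_setIntegral_of_forall_lt {X : Type*} [MeasurableSpace X] {ν : Measure X}
    {s : Set X} {f g : X → ℝ} (hs : MeasurableSet s) (hνs : ν s ≠ 0) (hf : IntegrableOn f s ν)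
    (hg : IntegrableOn g s ν) (hlt : ∀ x ∈ s, f x < g x) :
    ∫ x in s, f x ∂ν < ∫ x in s, g x ∂ν := by
  have hpos : 0 < ∫ x in s, (g x - f x) ∂ν := by
    rw [setIntegral_pos_iff_support_of_nonneg_ae
      ((ae_restrict_iff' hs).2 (ae_of_all _ fun x hx => (sub_pos.2 (hlt x hx)).le)) (hg.sub hf)]
    have hsupp : s ⊆ Function.support (fun x => g x - f x) ∩ s := fun x hx =>
      ⟨(sub_pos.2 (hlt x hx)).ne', hx⟩
    exact pos_iff_ne_zero.2 fun h => hνs (measure_mono_null hsupp h)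
  rwa [integral_sub hg hf, sub_pos] at hpos

section SumSqrt

variable {ι κ : Type*} [Fintype ι] [Fintype κ] {μ : ι → ℝ} {ν : κ → ℝ}

lemma prod_one_add_mul_pos (hμ : ∀ i, 0 ≤ μ i) {t : ℝ} (ht : 0 ≤ t) : 0 < ∏ i, (1 + μ i * t) :=
  prod_pos fun i _ => add_pos_of_pos_of_nonneg one_pos (mul_nonneg (hμ i) ht)

lemma sum_sqrtKernel_eq_log_prod (hμ : ∀ i, 0 ≤ μ i) {t : ℝ} (ht : 0 ≤ t) :
    ∑ i, sqrtKernel (μ i) t = Real.log (∏ i, (1 + μ i * t)) / (t * √t) := by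
  rw [Real.log_prod fun i _ => (add_pos_of_pos_of_nonneg one_pos (mul_nonneg (hμ i) ht)).ne',
    sum_div]
  rfl

lemma integrableOn_sum_sqrtKernel (hμ : ∀ i, 0 ≤ μ i) :
    IntegrableOn (fun t => ∑ i, sqrtKernel (μ i) t) (Ioi 0) :=
  integrable_finsetSum _ fun i _ => integrableOn_sqrtKernel (hμ i)

lemma integral_sum_sqrtKernel (hμ : ∀ i, 0 ≤ μ i) :
    ∫ t in Ioi 0, ∑ i, sqrtKernel (μ i) t = 2 * Real.pi * ∑ i, √(μ i) := by
  rw [integral_finsetSum _ fun i _ => integrableOn_sqrtKernel (hμ i), mul_sum]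
  exact sum_congr rfl fun i _ => integral_sqrtKernel (hμ i)

lemma sum_sqrt_le_sum_sqrt_of_prod_le (hμ : ∀ i, 0 ≤ μ i) (hν : ∀ j, 0 ≤ ν j)
    (hle : ∀ t, 0 < t → ∏ i, (1 + μ i * t) ≤ ∏ j, (1 + ν j * t)) :
    ∑ i, √(μ i) ≤ ∑ j, √(ν j) := by
  have key := setIntegral_mono_on (integrableOn_sum_sqrtKernel hμ)
    (integrableOn_sum_sqrtKernel hν) measurableSet_Ioi fun t (ht : 0 < t) => by
      rw [sum_sqrtKernel_eq_log_prod hμ ht.le, sum_sqrtKernel_eq_log_prod hν ht.le]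
      gcongr
      exacts [prod_one_add_mul_pos hμ ht.le, hle t ht]
  rw [integral_sum_sqrtKernel hμ, integral_sum_sqrtKernel hν] at key
  exact le_of_mul_le_mul_left key (by positivity)

lemma sum_sqrt_lt_sum_sqrt_of_prod_lt (hμ : ∀ i, 0 ≤ μ i) (hν : ∀ j, 0 ≤ ν j)
    (hlt : ∀ t, 0 < t → ∏ i, (1 + μ i * t) < ∏ j, (1 + ν j * t)) :
    ∑ i, √(μ i) < ∑ j, √(ν j) := by
  have key := setIntegral_lt_setIntegral_of_forall_lt measurableSet_Ioi (by simp)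
    (integrableOn_sum_sqrtKernel hμ) (integrableOn_sum_sqrtKernel hν) fun t (ht : 0 < t) => by
      rw [sum_sqrtKernel_eq_log_prod hμ ht.le, sum_sqrtKernel_eq_log_prod hν ht.le]
      gcongr
      exacts [prod_one_add_mul_pos hμ ht.le, hlt t ht]
  rw [integral_sum_sqrtKernel hμ, integral_sum_sqrtKernel hν] at key
  exact lt_of_mul_lt_mul_left key (by positivity)

end SumSqrt

theorem Polynomial.neg_pow_mul_eval_neg_inv {K : Type*} [Field K] {p : K[X]} {n : ℕ}
    (hp : p.natDegree ≤ n) {t : K} (ht : t ≠ 0) :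
    (-t) ^ n * p.eval (-t⁻¹) = ∑ k ∈ range (n + 1), (-1) ^ k * p.coeff (n - k) * t ^ k := by
  rw [eval_eq_sum_range' (Nat.lt_succ_of_le hp), mul_sum,
    ← sum_range_reflect (fun k => (-1) ^ k * p.coeff (n - k) * t ^ k)]
  refine sum_congr rfl fun j hj => ?_
  obtain ⟨d, rfl⟩ := Nat.exists_eq_add_of_le (Nat.lt_succ_iff.mp (mem_range.mp hj))
  rw [Nat.add_sub_cancel, Nat.sub_sub_self (Nat.le_add_right j d), Nat.add_sub_cancel_left]
  calc (-t) ^ (j + d) * (p.coeff j * (-t⁻¹) ^ j)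
      = ((-t) * (-t⁻¹)) ^ j * (-t) ^ d * p.coeff j := by rw [pow_add, mul_pow]; ring
    _ = (-1) ^ d * p.coeff j * t ^ d := by
      rw [neg_mul_neg, mul_inv_cancel₀ ht, one_pow, neg_pow]; ring

theorem Matrix.IsHermitian.prod_one_add_eigenvalues_mul {m : Type*} [Fintype m] [DecidableEq m]
    {A : Matrix m m ℝ} (hA : A.IsHermitian) {t : ℝ} (ht : t ≠ 0) :
    ∏ i, (1 + hA.eigenvalues i * t) = ∑ k ∈ range (Fintype.card m + 1),
      (-1) ^ k * A.charpoly.coeff (Fintype.card m - k) * t ^ k := by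
  rw [← neg_pow_mul_eval_neg_inv A.charpoly_natDegree_eq_dim.le ht, hA.charpoly_eq, eval_prod,
    ← card_univ, ← prod_const, ← prod_mul_distrib]
  refine prod_congr rfl fun i _ => ?_
  simp only [Real.ringHom_apply, eval_sub, eval_X, eval_C, neg_mul]
  field_simp
  ring

lemma Matrix.charpoly_coeff_card {R m : Type*} [CommRing R] [Nontrivial R] [Fintype m]
    [DecidableEq m] (M : Matrix m m R) : M.charpoly.coeff (Fintype.card m) = 1 := by
  simpa using M.charpoly_monic.coeff_natDegree

namespace SimpleGraph

variable {V : Type*} [Fintype V] [DecidableEq V]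

lemma lapMatrix_charpoly_coeff_zero [Nonempty V] (G : SimpleGraph V) [DecidableRel G.Adj] :
    (G.lapMatrix ℝ).charpoly.coeff 0 = 0 := by
  have h := (G.lapMatrix ℝ).det_eq_sign_charpoly_coeff
  rw [G.det_lapMatrix_eq_zero] at h
  exact (mul_eq_zero.1 h.symm).resolve_left (pow_ne_zero _ (by norm_num))

lemma signed_lapMatrix_charpoly_coeff_le_of_le {G H : SimpleGraph V} [DecidableRel G.Adj]
    [DecidableRel H.Adj] (h : ∀ k, 1 ≤ k → k ≤ Fintype.card V - 1 →
      (-1 : ℝ) ^ k * (G.lapMatrix ℝ).charpoly.coeff (Fintype.card V - k) ≤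
        (-1) ^ k * (H.lapMatrix ℝ).charpoly.coeff (Fintype.card V - k))
    {k : ℕ} (hk : k ≤ Fintype.card V) :
    (-1 : ℝ) ^ k * (G.lapMatrix ℝ).charpoly.coeff (Fintype.card V - k) ≤
      (-1) ^ k * (H.lapMatrix ℝ).charpoly.coeff (Fintype.card V - k) := by
  rcases Nat.eq_zero_or_pos k with rfl | hk0
  · simp [Matrix.charpoly_coeff_card]
  rcases hk.eq_or_lt with rfl | hkn
  · have : Nonempty V := Fintype.card_pos_iff.1 hk0
    simp [lapMatrix_charpoly_coeff_zero]
  · exact h k hk0 (by omega)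

end SimpleGraph

end

theorem lel_mono_of_laplacian_coeff_le (n : ℕ) (G H : SimpleGraph (Fin n))
    [DecidableRel G.Adj] [DecidableRel H.Adj]
    (hG : (G.lapMatrix ℝ).IsHermitian) (hH : (H.lapMatrix ℝ).IsHermitian)
    (cG cH : ℕ → ℝ)
    (hcG : ∀ k, cG k = (-1 : ℝ) ^ k * ((G.lapMatrix ℝ).charpoly.coeff (n - k)))
    (hcH : ∀ k, cH k = (-1 : ℝ) ^ k * ((H.lapMatrix ℝ).charpoly.coeff (n - k)))
    (hle : ∀ k, 1 ≤ k → k ≤ n - 1 → cG k ≤ cH k) :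
    (∑ i, Real.sqrt (hG.eigenvalues i) ≤ ∑ i, Real.sqrt (hH.eigenvalues i)) ∧
    ((∃ k, 1 ≤ k ∧ k ≤ n - 1 ∧ cG k < cH k) →
      ∑ i, Real.sqrt (hG.eigenvalues i) < ∑ i, Real.sqrt (hH.eigenvalues i)) := by
  have hμ := (G.posSemidef_lapMatrix ℝ).eigenvalues_nonneg
  have hν := (H.posSemidef_lapMatrix ℝ).eigenvalues_nonneg
  have hcoeff : ∀ k ≤ n, cG k ≤ cH k := fun k hk => by
    simpa [hcG, hcH] using SimpleGraph.signed_lapMatrix_charpoly_coeff_le_of_le (G := G) (H := H)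
      (by simpa [hcG, hcH] using hle) (by simpa using hk)
  have hprodG : ∀ t, 0 < t →
      ∏ i, (1 + hG.eigenvalues i * t) = ∑ k ∈ range (n + 1), cG k * t ^ k :=
    fun t ht => by simpa [hcG] using hG.prod_one_add_eigenvalues_mul ht.ne'
  have hprodH : ∀ t, 0 < t →
      ∏ i, (1 + hH.eigenvalues i * t) = ∑ k ∈ range (n + 1), cH k * t ^ k :=
    fun t ht => by simpa [hcH] using hH.prod_one_add_eigenvalues_mul ht.ne'
  refine ⟨sum_sqrt_le_sum_sqrt_of_prod_le hμ hν fun t ht => ?_, ?_⟩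
  · rw [hprodG t ht, hprodH t ht]
    exact sum_le_sum fun k hk => by gcongr; exact hcoeff k (by simpa [Nat.lt_succ_iff] using hk)
  · rintro ⟨k, hk1, hkn, hlt⟩
    refine sum_sqrt_lt_sum_sqrt_of_prod_lt hμ hν fun t ht => ?_
    rw [hprodG t ht, hprodH t ht]
    refine sum_lt_sum (fun j hj => by gcongr; exact hcoeff j (by simpa [Nat.lt_succ_iff] using hj))
      ⟨k, mem_range.2 (by omega), by gcongr⟩
end
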